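/- arXiv:0806.0636 — 2 statements merged into one kernel-verified Lean document; each statement's English description precedes it below -/
import Mathlib

section
/- Let A and B be unital separable C*-algebras and let h : A → B and k : B → A be unital *-homomorphisms. Suppose there exist a sequence of unitaries (vₙ) in A with lim_{n→∞} ‖vₙ* k(h(a)) vₙ − a‖ = 0 for every a ∈ A, and a sequence of unitaries (wₙ) in B with lim_{n→∞} ‖wₙ* h(k(b)) wₙ − b‖ = 0 for every b ∈ B. Then there exist a *-isomorphism φ : A → B and a sequence of unitaries (uₙ) in B such that φ(a) = lim_{n→∞} uₙ* h(a) uₙ for every a ∈ A. -/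
open Filter Topology

section ElliottAux

variable {A B : Type*} [CStarAlgebra A] [CStarAlgebra B]

lemma mapUnitary' (f : A →⋆ₐ[ℂ] B) {u : A} (hu : u ∈ unitary A) : f u ∈ unitary B := by
  rw [Unitary.mem_iff] at hu ⊢
  refine ⟨?_, ?_⟩
  · rw [← map_star, ← map_mul, hu.1, map_one]
  · rw [← map_star, ← map_mul, hu.2, map_one]

lemma conj_norm_eq' {u x : A} (hu : u ∈ unitary A) : ‖star u * x * u‖ = ‖x‖ := by
  rw [CStarRing.norm_mul_mem_unitary _ hu, CStarRing.norm_mem_unitary_mul _ (Unitary.star_mem hu)]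

lemma conj_conj' (f : A →⋆ₐ[ℂ] B) {u : A} (hu : u ∈ unitary A) (z : B) (x : A) :
    star (star (f u) * z) * f (star u * x * u) * (star (f u) * z) = star z * f x * z := by
  have h1 : f u * star (f u) = 1 := (Unitary.mem_iff.mp (mapUnitary' f hu)).2
  have h2 : ∀ y : B, f u * (star (f u) * y) = y := fun y => by
    rw [← mul_assoc, h1, one_mul]
  simp only [map_mul, map_star, star_mul, star_star, mul_assoc, h2]

/-- Conjugation by a unitary as a star algebra homomorphism. -/
noncomputable def conjSAH (u : unitary B) : B →⋆ₐ[ℂ] B where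
  toFun x := star (u : B) * x * (u : B)
  map_one' := by
    show star (u : B) * 1 * (u : B) = 1
    rw [mul_one]
    exact (Unitary.mem_iff.mp u.2).1
  map_mul' x y := by
    show star (u : B) * (x * y) * (u : B)
      = (star (u : B) * x * (u : B)) * (star (u : B) * y * (u : B))
    have h2 : ∀ z : B, (u : B) * (star (u : B) * z) = z := fun z => by
      rw [← mul_assoc, (Unitary.mem_iff.mp u.2).2, one_mul]
    simp only [mul_assoc, h2]
  map_zero' := by simp
  map_add' x y := by simp [mul_add, add_mul]
  commutes' r := by
    show star (u : B) * (algebraMap ℂ B r) * (u : B) = algebraMap ℂ B r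
    simp only [Algebra.algebraMap_eq_smul_one, mul_smul_comm, smul_mul_assoc, mul_one]
    rw [(Unitary.mem_iff.mp u.2).1]
  map_star' x := by
    show star (u : B) * star x * (u : B) = star (star (u : B) * x * (u : B))
    simp [star_mul, star_star, mul_assoc]

@[simp] lemma conjSAH_apply (u : unitary B) (x : B) :
    conjSAH u x = star (u : B) * x * (u : B) := rfl

lemma cauchySeq_all {X Y : Type*} [PseudoMetricSpace X] [PseudoMetricSpace Y]
    (f : ℕ → X → Y) (hf : ∀ n, LipschitzWith 1 (f n)) (d : ℕ → X) (hd : DenseRange d)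
    (hC : ∀ i, CauchySeq fun n => f n (d i)) (x : X) : CauchySeq fun n => f n x := by
  rw [Metric.cauchySeq_iff]
  intro ε hε
  obtain ⟨i, hi⟩ := Metric.denseRange_iff.mp hd x (ε / 3) (by linarith)
  obtain ⟨N, hN⟩ := Metric.cauchySeq_iff.mp (hC i) (ε / 3) (by linarith)
  refine ⟨N, fun m hm n hn => ?_⟩
  have l1 : dist (f m x) (f m (d i)) ≤ dist x (d i) := by
    simpa using (hf m).dist_le_mul x (d i)
  have l2 : dist (f n (d i)) (f n x) ≤ dist (d i) x := by
    simpa using (hf n).dist_le_mul (d i) x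
  have l3 := dist_triangle4 (f m x) (f m (d i)) (f n (d i)) (f n x)
  have l4 := hN m hm n hn
  have l5 : dist (d i) x = dist x (d i) := dist_comm _ _
  linarith


lemma geom_cauchy {E : Type*} [NormedAddCommGroup E] (f : ℕ → E) (i : ℕ) (Cb : ℝ)
    (hbd : ∀ n, ‖f n‖ ≤ Cb)
    (hd : ∀ n, i ≤ n → ‖f (n + 1) - f n‖ ≤ 2 * (2⁻¹ : ℝ) ^ n) :
    CauchySeq f := by
  have hCb : (0 : ℝ) ≤ Cb := le_trans (norm_nonneg (f 0)) (hbd 0)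
  refine cauchySeq_of_le_geometric (2⁻¹ : ℝ) (2 + 2 * Cb * 2 ^ i) (by norm_num) fun n => ?_
  rw [dist_eq_norm]
  rcases le_or_gt i n with hin | hni
  · have h1 : ‖f n - f (n + 1)‖ ≤ 2 * (2⁻¹ : ℝ) ^ n := by
      rw [norm_sub_rev]; exact hd n hin
    have h2 : (0 : ℝ) ≤ 2 * Cb * 2 ^ i * (2⁻¹ : ℝ) ^ n := by positivity
    have h3 : (2 + 2 * Cb * 2 ^ i) * (2⁻¹ : ℝ) ^ n
        = 2 * (2⁻¹ : ℝ) ^ n + 2 * Cb * 2 ^ i * (2⁻¹ : ℝ) ^ n := by ring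
    linarith
  · have hb : ‖f n - f (n + 1)‖ ≤ 2 * Cb := by
      refine (norm_sub_le _ _).trans ?_
      have := hbd n; have := hbd (n + 1); linarith
    refine hb.trans ?_
    have h2 : ((2 : ℝ)⁻¹) ^ i ≤ (2⁻¹ : ℝ) ^ n :=
      pow_le_pow_of_le_one (by norm_num) (by norm_num) hni.le
    have h3 : (2 : ℝ) ^ i * (2⁻¹ : ℝ) ^ i = 1 := by
      rw [← mul_pow]; norm_num
    have h5 : (0 : ℝ) ≤ (2 : ℝ) ^ i := by positivity
    have h1 : (1 : ℝ) ≤ 2 ^ i * (2⁻¹ : ℝ) ^ n := by nlinarith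
    have h6 := mul_le_mul_of_nonneg_left h1 (by linarith : (0 : ℝ) ≤ 2 * Cb)
    have h4 : (0 : ℝ) ≤ (2⁻¹ : ℝ) ^ n := by positivity
    have h7 : (2 + 2 * Cb * 2 ^ i) * (2⁻¹ : ℝ) ^ n
        = 2 * (2⁻¹ : ℝ) ^ n + 2 * Cb * (2 ^ i * (2⁻¹ : ℝ) ^ n) := by ring
    rw [h7]
    rw [mul_one] at h6
    linarith

set_option maxHeartbeats 1600000 in
theorem elliott_aux
    [TopologicalSpace.SeparableSpace A] [TopologicalSpace.SeparableSpace B]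
    (h : A →⋆ₐ[ℂ] B) (k : B →⋆ₐ[ℂ] A)
    (v : ℕ → A) (hv : ∀ n, v n ∈ unitary A)
    (hvk : ∀ a : A, Filter.Tendsto (fun n => ‖star (v n) * k (h a) * v n - a‖)
      Filter.atTop (nhds 0))
    (w : ℕ → B) (hw : ∀ n, w n ∈ unitary B)
    (hwh : ∀ b : B, Filter.Tendsto (fun n => ‖star (w n) * h (k b) * w n - b‖)
      Filter.atTop (nhds 0)) :
    ∃ (φ : A ≃⋆ₐ[ℂ] B) (u : ℕ → B), (∀ n, u n ∈ unitary B) ∧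
      ∀ a : A, Filter.Tendsto (fun n => star (u n) * h a * u n)
        Filter.atTop (nhds (φ a)) := by
  classical
  obtain ⟨aseq, haseq⟩ := TopologicalSpace.exists_dense_seq A
  obtain ⟨bseq, hbseq⟩ := TopologicalSpace.exists_dense_seq B
  -- finite choice lemmas
  have chooseA : ∀ (S : Finset A) (ε : ℝ), 0 < ε →
      ∃ m, ∀ x ∈ S, ‖star (v m) * k (h x) * v m - x‖ ≤ ε := by
    intro S ε hε
    have : ∀ᶠ m in atTop, ∀ x ∈ S, ‖star (v m) * k (h x) * v m - x‖ ≤ ε := by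
      rw [Filter.eventually_all_finset]
      exact fun x _ => (hvk x).eventually_le_const hε
    exact this.exists
  have chooseB : ∀ (S : Finset B) (ε : ℝ), 0 < ε →
      ∃ m, ∀ y ∈ S, ‖star (w m) * h (k y) * w m - y‖ ≤ ε := by
    intro S ε hε
    have : ∀ᶠ m in atTop, ∀ y ∈ S, ‖star (w m) * h (k y) * w m - y‖ ≤ ε := by
      rw [Filter.eventually_all_finset]
      exact fun y _ => (hwh y).eventually_le_const hε
    exact this.exists
  -- the recursive step
  have hstep : ∀ (n : ℕ) (p : B × A), p.1 ∈ unitary B → p.2 ∈ unitary A →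
      ∃ q : B × A, q.1 ∈ unitary B ∧ q.2 ∈ unitary A ∧
        (∀ i ≤ n, ‖star q.1 * h (star p.2 * k (bseq i) * p.2) * q.1 - bseq i‖
            ≤ (2⁻¹ : ℝ) ^ n) ∧
        (∀ i ≤ n, ‖star q.1 * h (star p.2 * k (star p.1 * h (aseq i) * p.1) * p.2) * q.1
            - star p.1 * h (aseq i) * p.1‖ ≤ (2⁻¹ : ℝ) ^ n) ∧
        (∀ i ≤ n + 1, ‖star q.2 * k (star q.1 * h (aseq i) * q.1) * q.2 - aseq i‖
            ≤ (2⁻¹ : ℝ) ^ (n + 1)) ∧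
        (∀ i ≤ n, ‖star q.2 * k (star q.1 * h (star p.2 * k (bseq i) * p.2) * q.1) * q.2
            - star p.2 * k (bseq i) * p.2‖ ≤ (2⁻¹ : ℝ) ^ (n + 1)) := by
    intro n p hp1 hp2
    obtain ⟨l, hl⟩ := chooseB ((Finset.range (n + 1)).image bseq ∪
        (Finset.range (n + 1)).image (fun i => star p.1 * h (aseq i) * p.1))
        ((2⁻¹ : ℝ) ^ n) (by positivity)
    set u' : B := star (h p.2) * w l with hu'def
    have hu'mem : u' ∈ unitary B :=
      mul_mem (Unitary.star_mem (mapUnitary' h hp2)) (hw l)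
    have keyφ : ∀ y : B, star u' * h (star p.2 * k y * p.2) * u'
        = star (w l) * h (k y) * w l := fun y => conj_conj' h hp2 (w l) (k y)
    obtain ⟨m, hm⟩ := chooseA ((Finset.range (n + 2)).image aseq ∪
        (Finset.range (n + 1)).image (fun i => star p.2 * k (bseq i) * p.2))
        ((2⁻¹ : ℝ) ^ (n + 1)) (by positivity)
    set s' : A := star (k u') * v m with hs'def
    have hs'mem : s' ∈ unitary A :=
      mul_mem (Unitary.star_mem (mapUnitary' k hu'mem)) (hv m)
    have keyψ : ∀ x : A, star s' * k (star u' * h x * u') * s'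
        = star (v m) * k (h x) * v m := fun x => conj_conj' k hu'mem (v m) (h x)
    refine ⟨(u', s'), hu'mem, hs'mem, ?_, ?_, ?_, ?_⟩
    · intro i hi
      rw [keyφ]
      exact hl _ (Finset.mem_union_left _
        (Finset.mem_image_of_mem _ (Finset.mem_range.2 (by omega))))
    · intro i hi
      rw [keyφ]
      refine hl _ (Finset.mem_union_right _ ?_)
      exact Finset.mem_image.2 ⟨i, Finset.mem_range.2 (by omega), rfl⟩
    · intro i hi
      rw [keyψ]
      exact hm _ (Finset.mem_union_left _
        (Finset.mem_image_of_mem _ (Finset.mem_range.2 (by omega))))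
    · intro i hi
      rw [keyψ]
      refine hm _ (Finset.mem_union_right _ ?_)
      exact Finset.mem_image.2 ⟨i, Finset.mem_range.2 (by omega), rfl⟩
  choose q hq1 hq2 hq3 hq4 hq5 hq6 using hstep
  -- initial data
  obtain ⟨m0, hm0⟩ := chooseA {aseq 0} 1 one_pos
  have hs0mem : star (k (1 : B)) * v m0 ∈ unitary A :=
    mul_mem (Unitary.star_mem (mapUnitary' k (one_mem _))) (hv m0)
  -- the recursively defined sequence
  let σ : (n : ℕ) → {p : B × A // p.1 ∈ unitary B ∧ p.2 ∈ unitary A} := fun n =>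
    Nat.rec ⟨((1 : B), star (k (1 : B)) * v m0), one_mem _, hs0mem⟩
      (fun n ih => ⟨q n ih.1 ih.2.1 ih.2.2, hq1 n ih.1 ih.2.1 ih.2.2,
        hq2 n ih.1 ih.2.1 ih.2.2⟩) n
  set u : ℕ → B := fun n => (σ n).1.1 with hudef
  set s : ℕ → A := fun n => (σ n).1.2 with hsdef
  have hu : ∀ n, u n ∈ unitary B := fun n => (σ n).2.1
  have hs : ∀ n, s n ∈ unitary A := fun n => (σ n).2.2
  -- the approximating homomorphisms
  let Φh : ℕ → A →⋆ₐ[ℂ] B := fun n => (conjSAH ⟨u n, hu n⟩).comp h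
  let Ψh : ℕ → B →⋆ₐ[ℂ] A := fun n => (conjSAH ⟨s n, hs n⟩).comp k
  have hΦapp : ∀ n a, Φh n a = star (u n) * h a * u n := fun n a => rfl
  have hΨapp : ∀ n b, Ψh n b = star (s n) * k b * s n := fun n b => rfl
  -- the recursion relations, restated
  have hR1 : ∀ n, ∀ i ≤ n, ‖Φh (n + 1) (Ψh n (bseq i)) - bseq i‖ ≤ (2⁻¹ : ℝ) ^ n :=
    fun n => hq3 n (σ n).1 (σ n).2.1 (σ n).2.2
  have hR2 : ∀ n, ∀ i ≤ n,
      ‖Φh (n + 1) (Ψh n (Φh n (aseq i))) - Φh n (aseq i)‖ ≤ (2⁻¹ : ℝ) ^ n :=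
    fun n => hq4 n (σ n).1 (σ n).2.1 (σ n).2.2
  have hR3 : ∀ n, ∀ i ≤ n + 1,
      ‖Ψh (n + 1) (Φh (n + 1) (aseq i)) - aseq i‖ ≤ (2⁻¹ : ℝ) ^ (n + 1) :=
    fun n => hq5 n (σ n).1 (σ n).2.1 (σ n).2.2
  have hR4 : ∀ n, ∀ i ≤ n,
      ‖Ψh (n + 1) (Φh (n + 1) (Ψh n (bseq i))) - Ψh n (bseq i)‖ ≤ (2⁻¹ : ℝ) ^ (n + 1) :=
    fun n => hq6 n (σ n).1 (σ n).2.1 (σ n).2.2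
  -- base case of the almost-inverse property
  have P1a : ∀ n, ∀ i ≤ n, ‖Ψh n (Φh n (aseq i)) - aseq i‖ ≤ (2⁻¹ : ℝ) ^ n := by
    intro n
    cases n with
    | zero =>
      intro i hi
      rw [Nat.le_zero.mp hi]
      have e0 : Ψh 0 (Φh 0 (aseq 0)) = star (v m0) * k (h (aseq 0)) * v m0 :=
        conj_conj' k (one_mem _) (v m0) (h (aseq 0))
      rw [e0]
      simpa using hm0 _ (Finset.mem_singleton_self _)
    | succ n => exact hR3 n
  -- contractivity
  have hΦcontr : ∀ n (x : A), ‖Φh n x‖ ≤ ‖x‖ := fun n x => by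
    rw [hΦapp, conj_norm_eq' (hu n)]
    exact NonUnitalStarAlgHom.norm_apply_le h x
  have hΨcontr : ∀ n (y : B), ‖Ψh n y‖ ≤ ‖y‖ := fun n y => by
    rw [hΨapp, conj_norm_eq' (hs n)]
    exact NonUnitalStarAlgHom.norm_apply_le k y
  have hΦlip : ∀ n, LipschitzWith 1 (Φh n) := fun n =>
    LipschitzWith.of_dist_le_mul fun x y => by
      rw [dist_eq_norm, dist_eq_norm, ← map_sub, NNReal.coe_one, one_mul]
      exact hΦcontr n _
  have hΨlip : ∀ n, LipschitzWith 1 (Ψh n) := fun n =>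
    LipschitzWith.of_dist_le_mul fun x y => by
      rw [dist_eq_norm, dist_eq_norm, ← map_sub, NNReal.coe_one, one_mul]
      exact hΨcontr n _
  -- telescoping estimates
  have DA : ∀ n, ∀ i ≤ n, ‖Φh (n + 1) (aseq i) - Φh n (aseq i)‖ ≤ 2 * (2⁻¹ : ℝ) ^ n := by
    intro n i hi
    have e : Φh (n + 1) (aseq i) - Φh n (aseq i)
        = Φh (n + 1) (aseq i - Ψh n (Φh n (aseq i)))
          + (Φh (n + 1) (Ψh n (Φh n (aseq i))) - Φh n (aseq i)) := by
      rw [map_sub]; abel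
    rw [e]
    refine (norm_add_le _ _).trans ?_
    have t1' : ‖aseq i - Ψh n (Φh n (aseq i))‖ ≤ (2⁻¹ : ℝ) ^ n := by
      rw [norm_sub_rev]
      exact P1a n i hi
    have t1 : ‖Φh (n + 1) (aseq i - Ψh n (Φh n (aseq i)))‖ ≤ (2⁻¹ : ℝ) ^ n :=
      le_trans (hΦcontr (n + 1) (aseq i - Ψh n (Φh n (aseq i)))) t1'
    have t2 := hR2 n i hi
    linarith
  have DB : ∀ n, ∀ i ≤ n, ‖Ψh (n + 1) (bseq i) - Ψh n (bseq i)‖ ≤ 2 * (2⁻¹ : ℝ) ^ n := by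
    intro n i hi
    have e : Ψh (n + 1) (bseq i) - Ψh n (bseq i)
        = Ψh (n + 1) (bseq i - Φh (n + 1) (Ψh n (bseq i)))
          + (Ψh (n + 1) (Φh (n + 1) (Ψh n (bseq i))) - Ψh n (bseq i)) := by
      rw [map_sub]; abel
    rw [e]
    refine (norm_add_le _ _).trans ?_
    have t1' : ‖bseq i - Φh (n + 1) (Ψh n (bseq i))‖ ≤ (2⁻¹ : ℝ) ^ n := by
      rw [norm_sub_rev]
      exact hR1 n i hi
    have t1 : ‖Ψh (n + 1) (bseq i - Φh (n + 1) (Ψh n (bseq i)))‖ ≤ (2⁻¹ : ℝ) ^ n :=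
      le_trans (hΨcontr (n + 1) (bseq i - Φh (n + 1) (Ψh n (bseq i)))) t1'
    have t2 := hR4 n i hi
    have t3 : ((2 : ℝ)⁻¹) ^ (n + 1) ≤ (2⁻¹ : ℝ) ^ n := by
      rw [pow_succ]
      nlinarith [pow_pos (by norm_num : (0:ℝ) < (2:ℝ)⁻¹) n]
    linarith
  have hcA : ∀ i, CauchySeq fun n => Φh n (aseq i) :=
    fun i => geom_cauchy (fun n => Φh n (aseq i)) i ‖aseq i‖ (fun n => hΦcontr n (aseq i)) (fun n hn => DA n i hn)
  have hcB : ∀ i, CauchySeq fun n => Ψh n (bseq i) :=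
    fun i => geom_cauchy (fun n => Ψh n (bseq i)) i ‖bseq i‖ (fun n => hΨcontr n (bseq i)) (fun n hn => DB n i hn)
  have hΦex : ∀ a : A, ∃ y : B, Tendsto (fun n => Φh n a) atTop (𝓝 y) := fun a =>
    cauchySeq_tendsto_of_complete
      (cauchySeq_all (fun n => ⇑(Φh n)) hΦlip aseq haseq hcA a)
  choose Φ hΦ using hΦex
  have hΨex : ∀ b : B, ∃ x : A, Tendsto (fun n => Ψh n b) atTop (𝓝 x) := fun b =>
    cauchySeq_tendsto_of_complete
      (cauchySeq_all (fun n => ⇑(Ψh n)) hΨlip bseq hbseq hcB b)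
  choose Ψ hΨ using hΨex
  -- the limit maps are 1-Lipschitz
  have ΦLip : LipschitzWith 1 Φ := by
    refine LipschitzWith.of_dist_le_mul fun x y => ?_
    rw [NNReal.coe_one, one_mul]
    have T : Tendsto (fun n => dist (Φh n x) (Φh n y)) atTop (𝓝 (dist (Φ x) (Φ y))) :=
      (hΦ x).dist (hΦ y)
    refine le_of_tendsto T (Filter.Eventually.of_forall fun n => ?_)
    simpa using (hΦlip n).dist_le_mul x y
  have ΨLip : LipschitzWith 1 Ψ := by
    refine LipschitzWith.of_dist_le_mul fun x y => ?_
    rw [NNReal.coe_one, one_mul]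
    have T : Tendsto (fun n => dist (Ψh n x) (Ψh n y)) atTop (𝓝 (dist (Ψ x) (Ψ y))) :=
      (hΨ x).dist (hΨ y)
    refine le_of_tendsto T (Filter.Eventually.of_forall fun n => ?_)
    simpa using (hΨlip n).dist_le_mul x y
  -- algebraic properties of the limit map
  have Φadd : ∀ x y, Φ (x + y) = Φ x + Φ y := by
    intro x y
    have T1 : Tendsto (fun n => Φh n x + Φh n y) atTop (𝓝 (Φ x + Φ y)) := (hΦ x).add (hΦ y)
    have e : (fun n => Φh n x + Φh n y) = fun n => Φh n (x + y) :=
      funext fun n => (map_add (Φh n) x y).symm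
    rw [e] at T1
    exact tendsto_nhds_unique (hΦ (x + y)) T1
  have Φmul : ∀ x y, Φ (x * y) = Φ x * Φ y := by
    intro x y
    have T1 : Tendsto (fun n => Φh n x * Φh n y) atTop (𝓝 (Φ x * Φ y)) := (hΦ x).mul (hΦ y)
    have e : (fun n => Φh n x * Φh n y) = fun n => Φh n (x * y) :=
      funext fun n => (map_mul (Φh n) x y).symm
    rw [e] at T1
    exact tendsto_nhds_unique (hΦ (x * y)) T1
  have Φstar : ∀ x, Φ (star x) = star (Φ x) := by
    intro x
    have T1 : Tendsto (fun n => star (Φh n x)) atTop (𝓝 (star (Φ x))) := (hΦ x).star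
    have e : (fun n => star (Φh n x)) = fun n => Φh n (star x) :=
      funext fun n => (map_star (Φh n) x).symm
    rw [e] at T1
    exact tendsto_nhds_unique (hΦ (star x)) T1
  have Φsmul : ∀ (c : ℂ) (x : A), Φ (c • x) = c • Φ x := by
    intro c x
    have T1 : Tendsto (fun n => c • Φh n x) atTop (𝓝 (c • Φ x)) := (hΦ x).const_smul c
    have e : (fun n => c • Φh n x) = fun n => Φh n (c • x) :=
      funext fun n => (map_smul (Φh n) c x).symm
    rw [e] at T1
    exact tendsto_nhds_unique (hΦ (c • x)) T1
  have halfpow : Tendsto (fun n : ℕ => (2⁻¹ : ℝ) ^ n) atTop (𝓝 0) :=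
    tendsto_pow_atTop_nhds_zero_of_lt_one (by norm_num) (by norm_num)
  -- Ψ ∘ Φ = id
  have ΨΦa : ∀ i, Ψ (Φ (aseq i)) = aseq i := by
    intro i
    have T1 : Tendsto (fun n => Ψh n (Φh n (aseq i))) atTop (𝓝 (aseq i)) := by
      rw [← tendsto_sub_nhds_zero_iff]
      refine squeeze_zero_norm' ?_ halfpow
      filter_upwards [eventually_ge_atTop i] with n hn
      exact P1a n i hn
    have T2 : Tendsto (fun n => Ψh n (Φh n (aseq i))) atTop (𝓝 (Ψ (Φ (aseq i)))) := by
      rw [tendsto_iff_dist_tendsto_zero]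
      have hb : ∀ n, dist (Ψh n (Φh n (aseq i))) (Ψ (Φ (aseq i)))
          ≤ dist (Φh n (aseq i)) (Φ (aseq i))
            + dist (Ψh n (Φ (aseq i))) (Ψ (Φ (aseq i))) := by
        intro n
        refine le_trans (dist_triangle (Ψh n (Φh n (aseq i))) (Ψh n (Φ (aseq i)))
          (Ψ (Φ (aseq i)))) ?_
        have hl : dist (Ψh n (Φh n (aseq i))) (Ψh n (Φ (aseq i)))
            ≤ dist (Φh n (aseq i)) (Φ (aseq i)) := by
          simpa using (hΨlip n).dist_le_mul (Φh n (aseq i)) (Φ (aseq i))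
        linarith
      have hz : Tendsto (fun n => dist (Φh n (aseq i)) (Φ (aseq i))
          + dist (Ψh n (Φ (aseq i))) (Ψ (Φ (aseq i)))) atTop (𝓝 0) := by
        have t1 := tendsto_iff_dist_tendsto_zero.mp (hΦ (aseq i))
        have t2 := tendsto_iff_dist_tendsto_zero.mp (hΨ (Φ (aseq i)))
        simpa using t1.add t2
      exact squeeze_zero (fun n => dist_nonneg) hb hz
    exact tendsto_nhds_unique T2 T1
  have ΨΦ : ∀ a, Ψ (Φ a) = a := by
    have heq : Set.EqOn (Ψ ∘ Φ) id (Set.range aseq) := by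
      rintro x ⟨i, rfl⟩
      exact ΨΦa i
    have hfun : Ψ ∘ Φ = id :=
      Continuous.ext_on haseq (ΨLip.continuous.comp ΦLip.continuous) continuous_id heq
    exact fun a => congrFun hfun a
  -- Φ ∘ Ψ = id
  have ΦΨb : ∀ i, Φ (Ψ (bseq i)) = bseq i := by
    intro i
    have T1 : Tendsto (fun n => Φh (n + 1) (Ψh n (bseq i))) atTop (𝓝 (bseq i)) := by
      rw [← tendsto_sub_nhds_zero_iff]
      refine squeeze_zero_norm' ?_ halfpow
      filter_upwards [eventually_ge_atTop i] with n hn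
      exact hR1 n i hn
    have T2 : Tendsto (fun n => Φh (n + 1) (Ψh n (bseq i))) atTop (𝓝 (Φ (Ψ (bseq i)))) := by
      rw [tendsto_iff_dist_tendsto_zero]
      have hb : ∀ n, dist (Φh (n + 1) (Ψh n (bseq i))) (Φ (Ψ (bseq i)))
          ≤ dist (Ψh n (bseq i)) (Ψ (bseq i))
            + dist (Φh (n + 1) (Ψ (bseq i))) (Φ (Ψ (bseq i))) := by
        intro n
        refine le_trans (dist_triangle (Φh (n + 1) (Ψh n (bseq i)))
          (Φh (n + 1) (Ψ (bseq i))) (Φ (Ψ (bseq i)))) ?_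
        have hl : dist (Φh (n + 1) (Ψh n (bseq i))) (Φh (n + 1) (Ψ (bseq i)))
            ≤ dist (Ψh n (bseq i)) (Ψ (bseq i)) := by
          simpa using (hΦlip (n + 1)).dist_le_mul (Ψh n (bseq i)) (Ψ (bseq i))
        linarith
      have hz : Tendsto (fun n => dist (Ψh n (bseq i)) (Ψ (bseq i))
          + dist (Φh (n + 1) (Ψ (bseq i))) (Φ (Ψ (bseq i)))) atTop (𝓝 0) := by
        have t1 := tendsto_iff_dist_tendsto_zero.mp (hΨ (bseq i))
        have t2 := (tendsto_iff_dist_tendsto_zero.mp (hΦ (Ψ (bseq i)))).comp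
          (tendsto_add_atTop_nat 1)
        simpa using t1.add t2
      exact squeeze_zero (fun n => dist_nonneg) hb hz
    exact tendsto_nhds_unique T2 T1
  have ΦΨ : ∀ b, Φ (Ψ b) = b := by
    have heq : Set.EqOn (Φ ∘ Ψ) id (Set.range bseq) := by
      rintro x ⟨i, rfl⟩
      exact ΦΨb i
    have hfun : Φ ∘ Ψ = id :=
      Continuous.ext_on hbseq (ΦLip.continuous.comp ΨLip.continuous) continuous_id heq
    exact fun b => congrFun hfun b
  -- assemble the star algebra isomorphism
  refine ⟨{ toFun := Φ, invFun := Ψ, left_inv := ΨΦ, right_inv := ΦΨ,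
            map_add' := Φadd, map_mul' := Φmul, map_smul' := Φsmul,
            map_star' := Φstar }, u, hu, fun a => ?_⟩
  show Tendsto (fun n => star (u n) * h a * u n) atTop (𝓝 (Φ a))
  have e : (fun n => star (u n) * h a * u n) = fun n => Φh n a :=
    funext fun n => (hΦapp n a).symm
  rw [e]
  exact hΦ a


end ElliottAux

theorem stmt12 {A B : Type*}
    [NormedRing A] [StarRing A] [CStarRing A] [NormedAlgebra ℂ A] [StarModule ℂ A]
    [CompleteSpace A] [TopologicalSpace.SeparableSpace A]
    [NormedRing B] [StarRing B] [CStarRing B] [NormedAlgebra ℂ B] [StarModule ℂ B]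
    [CompleteSpace B] [TopologicalSpace.SeparableSpace B]
    (h : A →⋆ₐ[ℂ] B) (k : B →⋆ₐ[ℂ] A)
    (v : ℕ → A) (hv : ∀ n, v n ∈ unitary A)
    (hvk : ∀ a : A, Filter.Tendsto (fun n => ‖star (v n) * k (h a) * v n - a‖)
      Filter.atTop (nhds 0))
    (w : ℕ → B) (hw : ∀ n, w n ∈ unitary B)
    (hwh : ∀ b : B, Filter.Tendsto (fun n => ‖star (w n) * h (k b) * w n - b‖)
      Filter.atTop (nhds 0)) :
    ∃ (φ : A ≃⋆ₐ[ℂ] B) (u : ℕ → B), (∀ n, u n ∈ unitary B) ∧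
      ∀ a : A, Filter.Tendsto (fun n => star (u n) * h a * u n)
        Filter.atTop (nhds (φ a)) := by
  letI : CStarAlgebra A :=
    { ‹NormedRing A›, ‹StarRing A›, ‹CStarRing A›, ‹NormedAlgebra ℂ A›,
      ‹StarModule ℂ A›, ‹CompleteSpace A› with }
  letI : CStarAlgebra B :=
    { ‹NormedRing B›, ‹StarRing B›, ‹CStarRing B›, ‹NormedAlgebra ℂ B›,
      ‹StarModule ℂ B›, ‹CompleteSpace B› with }
  exact elliott_aux h k v hv hvk w hw hwh
end

section
/- Let C be a unital separable C*-algebra, A a unital C*-algebra, and φ₁, φ₂ : C → A unital *-homomorphisms. Suppose there exist: an increasing sequence (Fₙ) of finite subsets of C whose union is dense in C; a sequence of positive reals (δₙ) with δₙ → 0; a sequence of unitaries (uₙ) in A with ‖uₙ* φ₁(a) uₙ − φ₂(a)‖ < δₙ for all a ∈ Fₙ; and for each n a continuous path of unitaries zₙ : [0,1] → U(A) with zₙ(0) = 1, zₙ(1) = uₙ* u_{n+1}, and ‖φ₂(a)·zₙ(t) − zₙ(t)·φ₂(a)‖ < 2^{−n} for all a ∈ Fₙ and all t ∈ [0,1].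 Then φ₁ and φ₂ are asymptotically unitarily equivalent: there is a continuous path of unitaries (u(t))_{t ∈ [0,∞)} in A such that lim_{t→∞} ‖u(t)* φ₁(c) u(t) − φ₂(c)‖ = 0 for every c ∈ C. -/
theorem stmt13 {C A : Type*}
    [NormedRing C] [StarRing C] [CStarRing C] [NormedAlgebra ℂ C] [StarModule ℂ C]
    [CompleteSpace C] [TopologicalSpace.SeparableSpace C]
    [NormedRing A] [StarRing A] [CStarRing A] [NormedAlgebra ℂ A] [StarModule ℂ A]
    [CompleteSpace A]
    (φ₁ φ₂ : C →⋆ₐ[ℂ] A)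
    (F : ℕ → Finset C) (hF_mono : ∀ n, F n ⊆ F (n + 1))
    (hF_dense : Dense (⋃ n, (F n : Set C)))
    (δ : ℕ → ℝ) (hδ_pos : ∀ n, 0 < δ n)
    (hδ_lim : Filter.Tendsto δ Filter.atTop (nhds 0))
    (u : ℕ → A) (hu : ∀ n, u n ∈ unitary A)
    (happrox : ∀ n, ∀ a ∈ F n, ‖star (u n) * φ₁ a * u n - φ₂ a‖ < δ n)
    (z : ℕ → ℝ → A)
    (hz_cont : ∀ n, ContinuousOn (z n) (Set.Icc (0 : ℝ) 1))
    (hz_mem : ∀ n, ∀ t ∈ Set.Icc (0 : ℝ) 1, z n t ∈ unitary A)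
    (hz_zero : ∀ n, z n 0 = 1)
    (hz_one : ∀ n, z n 1 = star (u n) * u (n + 1))
    (hz_comm : ∀ n, ∀ a ∈ F n, ∀ t ∈ Set.Icc (0 : ℝ) 1,
      ‖φ₂ a * z n t - z n t * φ₂ a‖ < (1 : ℝ) / 2 ^ n) :
    ∃ U : ℝ → A, ContinuousOn U (Set.Ici (0 : ℝ)) ∧
      (∀ t : ℝ, 0 ≤ t → U t ∈ unitary A) ∧
      ∀ c : C, Filter.Tendsto (fun t => ‖star (U t) * φ₁ c * U t - φ₂ c‖)
        Filter.atTop (nhds 0) := by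
  letI : CStarAlgebra A :=
    { ‹NormedRing A›, ‹StarRing A›, ‹CompleteSpace A›, ‹CStarRing A›,
      ‹NormedAlgebra ℂ A›, ‹StarModule ℂ A› with }
  letI : CStarAlgebra C :=
    { ‹NormedRing C›, ‹StarRing C›, ‹CompleteSpace C›, ‹CStarRing C›,
      ‹NormedAlgebra ℂ C›, ‹StarModule ℂ C› with }
  have hF_mono' : ∀ {m n : ℕ}, m ≤ n → F m ⊆ F n := by
    intro m n h
    induction h with
    | refl => exact fun _ h => h
    | step _ ih => exact fun x hx => hF_mono _ (ih hx)
  set V : ℕ → ℝ → A := fun n t => u n * z n (t - n) with hVdef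
  set U : ℝ → A := fun t => V ⌊t⌋₊ t with hUdef
  have hfrac : ∀ t : ℝ, 0 ≤ t → t - (⌊t⌋₊ : ℝ) ∈ Set.Icc (0 : ℝ) 1 := by
    intro t ht
    have h1 := Nat.floor_le ht
    have h2 := Nat.lt_floor_add_one t
    exact ⟨by linarith, by linarith⟩
  have hUmem : ∀ t : ℝ, 0 ≤ t → U t ∈ unitary A := fun t ht =>
    mul_mem (hu _) (hz_mem _ _ (hfrac t ht))
  -- U equals V n on pieces
  have hUV : ∀ n : ℕ, ∀ t ∈ Set.Ico (n : ℝ) (n + 1), U t = V n t := by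
    intro n t ht
    have h0 : (0 : ℝ) ≤ t := le_trans (Nat.cast_nonneg n) ht.1
    have : ⌊t⌋₊ = n := by
      rw [Nat.floor_eq_iff h0]
      exact ⟨ht.1, ht.2⟩
    simp only [hUdef, this]
  have hUn : ∀ n : ℕ, U (n : ℝ) = u n := by
    intro n
    simp only [hUdef, hVdef, Nat.floor_natCast, sub_self, hz_zero, mul_one]
  have hVn1 : ∀ n : ℕ, V n ((n : ℝ) + 1) = u (n + 1) := by
    intro n
    have : ((n : ℝ) + 1 - n) = 1 := by ring
    simp only [hVdef, this, hz_one, ← mul_assoc, Unitary.mul_star_self_of_mem (hu n), one_mul]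
  have hUV' : ∀ n : ℕ, ∀ t ∈ Set.Ioc (n : ℝ) (n + 1), U t = V n t := by
    intro n t ht
    rcases lt_or_eq_of_le ht.2 with hlt | heq
    · exact hUV n t ⟨le_of_lt ht.1, hlt⟩
    · subst heq
      rw [hVn1 n]
      have : ((n : ℝ) + 1) = ((n + 1 : ℕ) : ℝ) := by push_cast; ring
      rw [this, hUn]
  have hVcont : ∀ n : ℕ, ContinuousOn (V n) (Set.Icc (n : ℝ) (n + 1)) := by
    intro n
    apply continuousOn_const.mul
    refine (hz_cont n).comp ((continuous_id.sub continuous_const).continuousOn) ?_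
    intro t ht
    exact ⟨by simpa using ht.1, by simpa using sub_le_iff_le_add'.mpr ht.2⟩
  -- continuity from the right at each natural number
  have hright : ∀ n : ℕ, ContinuousWithinAt U (Set.Ici (n : ℝ)) n := by
    intro n
    have h2 : Set.Ico (n : ℝ) (n + 1) ∈ nhdsWithin (n : ℝ) (Set.Ici (n : ℝ)) := by
      rw [← Set.Ici_inter_Iio]
      exact Filter.inter_mem self_mem_nhdsWithin
        (mem_nhdsWithin_of_mem_nhds (Iio_mem_nhds (by linarith)))
    have h1 : ContinuousWithinAt (V n) (Set.Ici (n : ℝ)) n :=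
      (hVcont n _ ⟨le_refl _, by linarith⟩).mono_of_mem_nhdsWithin
        (Filter.mem_of_superset h2 Set.Ico_subset_Icc_self)
    refine h1.congr_of_eventuallyEq (Filter.eventuallyEq_of_mem h2 fun s hs => hUV n s hs) ?_
    rw [hUn n, hVdef]
    simp [hz_zero, mul_one]
  -- continuity from the left at each natural number + 1
  have hleft : ∀ n : ℕ, ContinuousWithinAt U (Set.Iic ((n : ℝ) + 1)) ((n : ℝ) + 1) := by
    intro n
    have h2 : Set.Ioc (n : ℝ) (n + 1) ∈ nhdsWithin ((n : ℝ) + 1) (Set.Iic ((n : ℝ) + 1)) := by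
      rw [← Set.Ioi_inter_Iic]
      exact Filter.inter_mem
        (mem_nhdsWithin_of_mem_nhds (Ioi_mem_nhds (by linarith))) self_mem_nhdsWithin
    have h1 : ContinuousWithinAt (V n) (Set.Iic ((n : ℝ) + 1)) ((n : ℝ) + 1) :=
      (hVcont n _ ⟨by linarith, le_refl _⟩).mono_of_mem_nhdsWithin
        (Filter.mem_of_superset h2 Set.Ioc_subset_Icc_self)
    refine h1.congr_of_eventuallyEq (Filter.eventuallyEq_of_mem h2 fun s hs => hUV' n s hs) ?_
    rw [hVn1 n]
    have : ((n : ℝ) + 1) = ((n + 1 : ℕ) : ℝ) := by push_cast; ring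
    rw [this, hUn]
  have hUcont : ContinuousOn U (Set.Ici (0 : ℝ)) := by
    intro t ht
    by_cases hnat : ∃ m : ℕ, (m : ℝ) = t
    · obtain ⟨m, rfl⟩ := hnat
      cases m with
      | zero => simpa using hright 0
      | succ k =>
        have hcast : ((k + 1 : ℕ) : ℝ) = (k : ℝ) + 1 := by push_cast; ring
        have h := (hleft k).union (by rw [← hcast]; exact hright (k + 1))
        rw [← hcast] at h
        refine h.mono fun x _ => ?_
        exact (le_total x ((k + 1 : ℕ) : ℝ)).imp (fun h => h) (fun h => h)
    · have ht0 : (0 : ℝ) ≤ t := ht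
      have hlt : (⌊t⌋₊ : ℝ) < t :=
        lt_of_le_of_ne (Nat.floor_le ht0) (fun h => hnat ⟨_, h⟩)
      have hopen : Set.Ioo ((⌊t⌋₊ : ℝ)) ((⌊t⌋₊ : ℝ) + 1) ∈ nhds t :=
        Ioo_mem_nhds hlt (Nat.lt_floor_add_one t)
      have hc : ContinuousAt (V ⌊t⌋₊) t :=
        ((hVcont ⌊t⌋₊).mono Set.Ioo_subset_Icc_self).continuousAt hopen
      have heq : ∀ᶠ s in nhds t, V ⌊t⌋₊ s = U s := by
        filter_upwards [hopen] with s hs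
        exact (hUV ⌊t⌋₊ s ⟨le_of_lt hs.1, hs.2⟩).symm
      exact (hc.congr heq).continuousWithinAt
  -- norm of conjugation by a unitary
  have hnorm_conj : ∀ w : A, w ∈ unitary A → ∀ x : A, ‖star w * x * w‖ = ‖x‖ := by
    intro w hw x
    rw [CStarRing.norm_mul_mem_unitary _ hw,
      CStarRing.norm_mem_unitary_mul _ (Unitary.star_mem hw)]
  -- key estimate for elements of the finite sets
  have key : ∀ m : ℕ, ∀ a ∈ F m, ∀ t : ℝ, (m : ℝ) ≤ t →
      ‖star (U t) * φ₁ a * U t - φ₂ a‖ ≤ δ ⌊t⌋₊ + 1 / 2 ^ ⌊t⌋₊ := by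
    intro m a ha t htm
    have ht0 : (0 : ℝ) ≤ t := le_trans (Nat.cast_nonneg m) htm
    set n := ⌊t⌋₊ with hn
    have hmn : m ≤ n := Nat.le_floor htm
    have haFn : a ∈ F n := hF_mono' hmn ha
    set w := z n (t - n) with hw
    have hwmem : w ∈ unitary A := hz_mem n _ (hfrac t ht0)
    have hw1 : star w * w = 1 := Unitary.star_mul_self_of_mem hwmem
    have hUt : U t = u n * w := rfl
    have hsplit : star (U t) * φ₁ a * U t - φ₂ a =
        star w * (star (u n) * φ₁ a * u n - φ₂ a) * w + (star w * φ₂ a * w - φ₂ a) := by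
      rw [hUt, star_mul]
      noncomm_ring
    have hcomm_eq : star w * φ₂ a * w - φ₂ a = star w * (φ₂ a * w - w * φ₂ a) := by
      rw [mul_sub, ← mul_assoc, ← mul_assoc, hw1, one_mul]
    calc ‖star (U t) * φ₁ a * U t - φ₂ a‖
        ≤ ‖star w * (star (u n) * φ₁ a * u n - φ₂ a) * w‖ + ‖star w * φ₂ a * w - φ₂ a‖ := by
          rw [hsplit]; exact norm_add_le _ _
      _ ≤ δ n + 1 / 2 ^ n := by
          apply add_le_add
          · rw [hnorm_conj w hwmem]
            exact le_of_lt (happrox n a haFn)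
          · rw [hcomm_eq, CStarRing.norm_mem_unitary_mul _ (Unitary.star_mem hwmem)]
            exact le_of_lt (hz_comm n a haFn _ (hfrac t ht0))
  have hbound : Filter.Tendsto (fun t : ℝ => δ ⌊t⌋₊ + 1 / 2 ^ ⌊t⌋₊)
      Filter.atTop (nhds 0) := by
    have h2 : Filter.Tendsto (fun n : ℕ => (1 : ℝ) / 2 ^ n) Filter.atTop (nhds 0) := by
      simp_rw [div_eq_mul_inv, one_mul, ← inv_pow]
      exact tendsto_pow_atTop_nhds_zero_of_lt_one (by norm_num) (by norm_num)
    have h1 : Filter.Tendsto (fun n : ℕ => δ n + 1 / 2 ^ n) Filter.atTop (nhds 0) := by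
      simpa using hδ_lim.add h2
    exact h1.comp tendsto_nat_floor_atTop
  -- convergence for elements of the union of the F n
  have hcU : ∀ c ∈ ⋃ n, (F n : Set C),
      Filter.Tendsto (fun t => ‖star (U t) * φ₁ c * U t - φ₂ c‖) Filter.atTop (nhds 0) := by
    intro c hc
    obtain ⟨m, hm⟩ := Set.mem_iUnion.mp hc
    refine squeeze_zero' (Filter.Eventually.of_forall fun t => norm_nonneg _) ?_ hbound
    filter_upwards [Filter.eventually_ge_atTop ((m : ℝ))] with t ht
    exact key m c hm t ht
  refine ⟨U, hUcont, hUmem, ?_⟩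
  intro c
  rw [Metric.tendsto_nhds]
  intro ε hε
  obtain ⟨a, ha_mem, ha_close⟩ : ∃ a ∈ ⋃ n, (F n : Set C), ‖c - a‖ < ε / 3 := by
    have hc : c ∈ closure (⋃ n, (F n : Set C)) := hF_dense c
    rw [Metric.mem_closure_iff] at hc
    obtain ⟨a, ha, hda⟩ := hc (ε / 3) (by linarith)
    exact ⟨a, ha, by rwa [dist_eq_norm] at hda⟩
  have h1 := hcU a ha_mem
  rw [Metric.tendsto_nhds] at h1
  filter_upwards [h1 (ε / 3) (by linarith), Filter.eventually_ge_atTop (0 : ℝ)] with t h1t ht0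
  rw [Real.dist_eq, sub_zero, abs_of_nonneg (norm_nonneg _)] at h1t ⊢
  have hUtmem := hUmem t ht0
  have hsplit : star (U t) * φ₁ c * U t - φ₂ c =
      star (U t) * (φ₁ c - φ₁ a) * U t + (star (U t) * φ₁ a * U t - φ₂ a) + (φ₂ a - φ₂ c) := by
    noncomm_ring
  have e1 : ‖star (U t) * (φ₁ c - φ₁ a) * U t‖ < ε / 3 := by
    rw [hnorm_conj _ hUtmem, ← map_sub]
    exact lt_of_le_of_lt (NonUnitalStarAlgHom.norm_apply_le φ₁ (c - a)) ha_close
  have e3 : ‖φ₂ a - φ₂ c‖ < ε / 3 := by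
    rw [← map_sub]
    calc ‖φ₂ (a - c)‖ ≤ ‖a - c‖ := NonUnitalStarAlgHom.norm_apply_le φ₂ (a - c)
      _ = ‖c - a‖ := norm_sub_rev a c
      _ < ε / 3 := ha_close
  calc ‖star (U t) * φ₁ c * U t - φ₂ c‖
      ≤ ‖star (U t) * (φ₁ c - φ₁ a) * U t + (star (U t) * φ₁ a * U t - φ₂ a)‖
        + ‖φ₂ a - φ₂ c‖ := by rw [hsplit]; exact norm_add_le _ _
    _ ≤ ‖star (U t) * (φ₁ c - φ₁ a) * U t‖ + ‖star (U t) * φ₁ a * U t - φ₂ a‖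
        + ‖φ₂ a - φ₂ c‖ := by gcongr; exact norm_add_le _ _
    _ < ε / 3 + ε / 3 + ε / 3 := by
        apply add_lt_add (add_lt_add e1 h1t) e3
    _ = ε := by ring
end
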